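/- The maximum cardinality of a 2-distance set X in H_7 such that R_7 ⊆ X and the two distances of X are 1 and √2 is exactly 12. -/

import Mathlib

noncomputable section

open scoped BigOperators Classical

/-- The set of Euclidean distances between distinct points of `X`. -/
def distSet {m : ℕ} (X : Set (EuclideanSpace ℝ (Fin m))) : Set ℝ :=
  {r | ∃ x ∈ X, ∃ y ∈ X, x ≠ y ∧ dist x y = r}

/-- `X` is a 2-distance set: exactly two distances occur between distinct points. -/
def IsTwoDistSet {m : ℕ} (X : Set (EuclideanSpace ℝ (Fin m))) : Prop :=
  (distSet X).ncard = 2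

/-- The affine hyperplane `H_d = {x ∈ ℝ^{d+1} : ∑ x_i = 1}`. -/
def Hplane (d : ℕ) : Set (EuclideanSpace ℝ (Fin (d+1))) :=
  {x | ∑ i, x i = 1}

/-- The regular simplex `R_d`: the standard basis vectors of `ℝ^{d+1}`. -/
def simplex (d : ℕ) : Set (EuclideanSpace ℝ (Fin (d+1))) :=
  Set.range (fun i => EuclideanSpace.single i (1:ℝ))

/-- The constant `c = (1 - (d+1-k)β)/(d+1)`. -/
def cval (d k : ℕ) (β : ℝ) : ℝ := (1 - ((d:ℝ) + 1 - (k:ℝ)) * β) / ((d:ℝ) + 1)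

/-- The set `T_d(k,β)` of points of `H_d` all of whose coordinates lie in `{c, c+β}`,
with exactly `k` coordinates equal to `c`. -/
def Tset (d k : ℕ) (β : ℝ) : Set (EuclideanSpace ℝ (Fin (d+1))) :=
  {x | x ∈ Hplane d ∧ (∀ i, x i = cval d k β ∨ x i = cval d k β + β) ∧
    {i | x i = cval d k β}.ncard = k}

/-- `𝔩(x,y) = |{i : x_i ≠ y_i}|/2`. -/
def lfun {m : ℕ} (x y : EuclideanSpace ℝ (Fin m)) : ℝ :=
  ({i | x i ≠ y i}.ncard : ℝ) / 2

/-!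
A point `x ∈ X` outside `R_7` is at distance `1` or `√2` from every `e_i`. Since
`‖x - e_i‖² = ‖x‖² - 2 x_i + 1`, every coordinate of `x` is `s/2` or `(s-1)/2`, where `s = ‖x‖²`,
i.e. a root of `(t - s/2)(t - s/2 + 1/2)`. Summing over `i` and using `∑ x_i = 1`, `∑ x_i² = s`
gives `2 (s - 1/2)² = 0`, so every coordinate is `±1/4` and exactly two are negative. Two such
points at distance `1` or `√2` have disjoint negative supports, so at most four of them fit into
eight coordinates; the four points with negative supports `{0,1}, {2,3}, {4,5}, {6,7}` show that
twelve is attained.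
-/

open Finset

theorem eq_one_or_eq_sqrt_two_iff_sq {r : ℝ} (hr : 0 ≤ r) :
    r = 1 ∨ r = √2 ↔ r ^ 2 = 1 ∨ r ^ 2 = 2 := by
  constructor
  · rintro (rfl | rfl) <;> simp
  · rintro (h | h)
    · exact Or.inl ((pow_eq_one_iff_of_nonneg hr two_ne_zero).mp h)
    · exact Or.inr (by rw [← h, Real.sqrt_sq hr])

theorem card_mul_le_card_of_pairwiseDisjoint {α : Type*} [Fintype α] [DecidableEq α]
    {𝒜 : Finset (Finset α)} {k : ℕ} (h𝒜 : (𝒜 : Set (Finset α)).PairwiseDisjoint id)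
    (hk : ∀ A ∈ 𝒜, #A = k) : #𝒜 * k ≤ Fintype.card α :=
  calc #𝒜 * k = ∑ A ∈ 𝒜, #A := by rw [sum_congr rfl hk, sum_const, smul_eq_mul]
    _ = #(𝒜.biUnion id) := (card_biUnion h𝒜).symm
    _ ≤ Fintype.card α := card_le_univ _

section SignVec

variable {ι : Type*} [DecidableEq ι]

theorem dist_single_one_sq [Fintype ι] (x : EuclideanSpace ℝ ι) (i : ι) :
    dist x (EuclideanSpace.single i 1) ^ 2 = ‖x‖ ^ 2 - 2 * x i + 1 := by
  rw [dist_eq_norm, norm_sub_sq_real, EuclideanSpace.inner_single_right]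
  simp

theorem single_one_injective [Fintype ι] :
    Function.Injective fun i : ι => EuclideanSpace.single i (1 : ℝ) :=
  EuclideanSpace.orthonormal_single.linearIndependent.injective

theorem dist_single_one_single_one [Fintype ι] {i j : ι} (hij : i ≠ j) :
    dist (EuclideanSpace.single i (1 : ℝ)) (EuclideanSpace.single j 1) = √2 := by
  rw [← Real.sqrt_sq dist_nonneg, dist_single_one_sq]
  simp [hij.symm]
  norm_num

/-- For `#A = 2` and `ι = Fin 8` these are the points of `Tset 7 2 (1/2)`. -/
def signVec (A : Finset ι) : EuclideanSpace ℝ ι :=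
  WithLp.toLp 2 fun i => if i ∈ A then -(1 / 4) else 1 / 4

theorem signVec_apply (A : Finset ι) (i : ι) :
    signVec A i = 1 / 4 - 1 / 2 * if i ∈ A then 1 else 0 := by
  by_cases hi : i ∈ A <;> norm_num [signVec, hi]

theorem norm_signVec_sq [Fintype ι] (A : Finset ι) : ‖signVec A‖ ^ 2 = Fintype.card ι / 16 := by
  have hsq : ∀ i, signVec A i ^ 2 = 1 / 16 := fun i => by
    by_cases hi : i ∈ A <;> norm_num [signVec_apply, hi]
  simp [EuclideanSpace.real_norm_sq_eq, hsq, div_eq_mul_inv]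

theorem sum_signVec [Fintype ι] (A : Finset ι) :
    ∑ i, signVec A i = Fintype.card ι / 4 - #A / 2 := by
  simp [signVec_apply, sum_sub_distrib]
  ring

theorem dist_signVec_sq [Fintype ι] (A B : Finset ι) :
    dist (signVec A) (signVec B) ^ 2 = (#(A \ B) + #(B \ A)) / 4 := by
  have hsq : ∀ i, (signVec A i - signVec B i) ^ 2 =
      1 / 4 * ((if i ∈ A \ B then 1 else 0) + if i ∈ B \ A then 1 else 0) := fun i => by
    by_cases hA : i ∈ A <;> by_cases hB : i ∈ B <;> norm_num [signVec_apply, hA, hB]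
  rw [dist_eq_norm, EuclideanSpace.real_norm_sq_eq]
  simp only [PiLp.sub_apply, hsq, ← mul_sum, sum_add_distrib, sum_boole, filter_mem_eq_inter,
    univ_inter]
  ring

theorem signVec_injective : Function.Injective (signVec (ι := ι)) := by
  intro A B h
  ext i
  have hi := congrArg (· i) h
  simp only [signVec_apply, sub_right_inj, mul_eq_mul_left_iff] at hi
  by_cases hA : i ∈ A <;> by_cases hB : i ∈ B <;> simp_all

theorem single_one_ne_signVec (i : ι) (A : Finset ι) :
    EuclideanSpace.single i 1 ≠ signVec A := by
  intro h
  have hi := congrArg (· i) h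
  by_cases hA : i ∈ A <;> norm_num [signVec_apply, hA] at hi

theorem dist_signVec_of_disjoint [Fintype ι] {A B : Finset ι}
    (hA : #A = 2) (hB : #B = 2) (hAB : Disjoint A B) : dist (signVec A) (signVec B) = 1 := by
  rw [← Real.sqrt_sq dist_nonneg, dist_signVec_sq, hAB.sdiff_eq_left, hAB.symm.sdiff_eq_left,
    hA, hB]
  norm_num

theorem disjoint_of_dist_signVec_sq [Fintype ι] {A B : Finset ι}
    (hA : #A = 2) (hB : #B = 2)
    (h : dist (signVec A) (signVec B) ^ 2 = 1 ∨ dist (signVec A) (signVec B) ^ 2 = 2) :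
    Disjoint A B := by
  rw [dist_signVec_sq] at h
  have hsum : #(A \ B) + #(B \ A) = 4 ∨ #(A \ B) + #(B \ A) = 8 := by
    rcases h with h | h <;> [left; right] <;> (field_simp at h; exact_mod_cast h)
  have hA' := card_sdiff_add_card_inter A B
  have hB' := card_sdiff_add_card_inter B A
  rw [inter_comm] at hB'
  rw [disjoint_iff_inter_eq_empty, ← card_eq_zero]
  omega

end SignVec

theorem ncard_simplex (d : ℕ) : (simplex d).ncard = d + 1 := by
  rw [simplex, Set.ncard_range_of_injective single_one_injective, Nat.card_eq_fintype_card,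
    Fintype.card_fin]

theorem single_one_mem_Hplane (d : ℕ) (i : Fin (d + 1)) :
    EuclideanSpace.single i 1 ∈ Hplane d := by
  simp [Hplane]

theorem exists_eq_signVec_of_dist_single {x : EuclideanSpace ℝ (Fin 8)} (hx : ∑ i, x i = 1)
    (hd : ∀ i, dist x (EuclideanSpace.single i 1) ^ 2 = 1 ∨
      dist x (EuclideanSpace.single i 1) ^ 2 = 2) :
    ∃ A : Finset (Fin 8), #A = 2 ∧ x = signVec A := by
  set s := ‖x‖ ^ 2
  have hroot : ∀ i, (x i - s / 2) * (x i - s / 2 + 1 / 2) = 0 := fun i => by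
    rcases hd i with h | h <;> rw [dist_single_one_sq] at h
    · exact mul_eq_zero_of_left (by linarith) _
    · exact mul_eq_zero_of_right _ (by linarith)
  have hs : s = 1 / 2 := by
    have hterm : ∀ i, (x i - s / 2) * (x i - s / 2 + 1 / 2) =
        x i ^ 2 - (s - 1 / 2) * x i + s / 2 * (s / 2 - 1 / 2) := fun i => by ring
    have hsq : ∑ i, x i ^ 2 = s := (EuclideanSpace.real_norm_sq_eq x).symm
    have hsum : ∑ i, (x i - s / 2) * (x i - s / 2 + 1 / 2) = 2 * (s - 1 / 2) ^ 2 := by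
      simp only [hterm, sum_add_distrib, sum_sub_distrib, ← mul_sum, hsq, hx, sum_const,
        card_univ, Fintype.card_fin, nsmul_eq_mul]
      ring
    rw [sum_eq_zero fun i _ => hroot i] at hsum
    nlinarith [sq_nonneg (s - 1 / 2)]
  have hcoord : ∀ i, x i = 1 / 4 ∨ x i = -(1 / 4) := fun i => by
    rcases mul_eq_zero.mp (hroot i) with h | h
    · exact Or.inl (by linarith)
    · exact Or.inr (by linarith)
  have hx_eq : x = signVec {i | x i < 0} := by
    ext i
    rcases hcoord i with h | h <;> simp [signVec_apply, h] <;> norm_num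
  refine ⟨_, ?_, hx_eq⟩
  rw [hx_eq, sum_signVec] at hx
  simp only [Fintype.card_fin] at hx
  exact_mod_cast (by linarith : ((#{i | x i < 0} : ℕ) : ℝ) = 2)

theorem ncard_le_twelve {X : Set (EuclideanSpace ℝ (Fin 8))} (hfin : X.Finite)
    (hH : X ⊆ Hplane 7) (hS : simplex 7 ⊆ X) (hD : distSet X ⊆ {1, √2}) : X.ncard ≤ 12 := by
  have hdist : ∀ x ∈ X, ∀ y ∈ X, x ≠ y → dist x y ^ 2 = 1 ∨ dist x y ^ 2 = 2 :=
    fun x hx y hy hxy =>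
      (eq_one_or_eq_sqrt_two_iff_sq dist_nonneg).mp (hD ⟨x, hx, y, hy, hxy, rfl⟩)
  let 𝒜 : Finset (Finset (Fin 8)) := {A | #A = 2 ∧ signVec A ∈ X}
  have hmem𝒜 : ∀ {A}, A ∈ 𝒜 ↔ #A = 2 ∧ signVec A ∈ X := by simp [𝒜]
  have hextra : X \ simplex 7 ⊆ signVec '' 𝒜 := by
    rintro x ⟨hx, hxS⟩
    obtain ⟨A, hA, rfl⟩ := exists_eq_signVec_of_dist_single (hH hx) fun i =>
      hdist x hx _ (hS ⟨i, rfl⟩) fun h => hxS (h ▸ ⟨i, rfl⟩)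
    exact ⟨A, hmem𝒜.mpr ⟨hA, hx⟩, rfl⟩
  have hdisj : (𝒜 : Set (Finset (Fin 8))).PairwiseDisjoint id := fun A hA B hB hAB =>
    disjoint_of_dist_signVec_sq (hmem𝒜.mp hA).1 (hmem𝒜.mp hB).1
      (hdist _ (hmem𝒜.mp hA).2 _ (hmem𝒜.mp hB).2 (signVec_injective.ne hAB))
  have hcard𝒜 : #𝒜 * 2 ≤ 8 :=
    card_mul_le_card_of_pairwiseDisjoint hdisj fun A hA => (hmem𝒜.mp hA).1
  have hcard_extra : (X \ simplex 7).ncard ≤ #𝒜 :=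
    calc (X \ simplex 7).ncard ≤ (signVec '' (𝒜 : Set (Finset (Fin 8)))).ncard :=
          Set.ncard_le_ncard hextra (𝒜.finite_toSet.image _)
      _ ≤ #𝒜 := by simpa using Set.ncard_image_le (f := signVec) 𝒜.finite_toSet
  calc X.ncard = (X \ simplex 7).ncard + (simplex 7).ncard :=
        (Set.ncard_sdiff_add_ncard_of_subset hS hfin).symm
    _ ≤ 12 := by rw [ncard_simplex]; omega

theorem signVec_mem_Hplane {A : Finset (Fin 8)} (hA : #A = 2) : signVec A ∈ Hplane 7 := by
  show ∑ i, signVec A i = 1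
  rw [sum_signVec, hA]
  norm_num

theorem dist_signVec_single_sq (A : Finset (Fin 8)) (i : Fin 8) :
    dist (signVec A) (EuclideanSpace.single i 1) ^ 2 = if i ∈ A then 2 else 1 := by
  rw [dist_single_one_sq, norm_signVec_sq, signVec_apply]
  split_ifs <;> norm_num

def disjointPairs : Finset (Finset (Fin 8)) := {{0, 1}, {2, 3}, {4, 5}, {6, 7}}

theorem card_of_mem_disjointPairs {A : Finset (Fin 8)} (hA : A ∈ disjointPairs) : #A = 2 := by
  simp only [disjointPairs, mem_insert, mem_singleton] at hA
  rcases hA with rfl | rfl | rfl | rfl <;> rfl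

theorem disjoint_of_mem_disjointPairs {A B : Finset (Fin 8)} (hA : A ∈ disjointPairs)
    (hB : B ∈ disjointPairs) (hAB : A ≠ B) : Disjoint A B := by
  simp only [disjointPairs, mem_insert, mem_singleton] at hA hB
  rcases hA with rfl | rfl | rfl | rfl <;> rcases hB with rfl | rfl | rfl | rfl <;>
    first | exact absurd rfl hAB | decide

def twelvePointSet : Set (EuclideanSpace ℝ (Fin 8)) := simplex 7 ∪ signVec '' disjointPairs

theorem twelvePointSet_finite : twelvePointSet.Finite :=
  (Set.finite_range _).union (disjointPairs.finite_toSet.image _)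

theorem twelvePointSet_subset_Hplane : twelvePointSet ⊆ Hplane 7 := by
  rintro x (⟨i, rfl⟩ | ⟨A, hA, rfl⟩)
  · exact single_one_mem_Hplane 7 i
  · exact signVec_mem_Hplane (card_of_mem_disjointPairs hA)

theorem ncard_twelvePointSet : twelvePointSet.ncard = 12 := by
  have hdisj : Disjoint (simplex 7) (signVec '' disjointPairs) := by
    rw [Set.disjoint_left]
    rintro _ ⟨i, rfl⟩ ⟨A, -, hA⟩
    exact single_one_ne_signVec i A hA.symm
  rw [twelvePointSet, Set.ncard_union_eq hdisj (Set.finite_range _), ncard_simplex,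
    Set.ncard_image_of_injective _ signVec_injective, Set.ncard_coe_finset]
  rfl

theorem distSet_twelvePointSet : distSet twelvePointSet = {1, √2} := by
  apply subset_antisymm
  · rintro _ ⟨x, hx, y, hy, hxy, rfl⟩
    rw [Set.mem_insert_iff, Set.mem_singleton_iff]
    rcases hx with ⟨i, rfl⟩ | ⟨A, hA, rfl⟩ <;> rcases hy with ⟨j, rfl⟩ | ⟨B, hB, rfl⟩
    · exact Or.inr (dist_single_one_single_one fun h => hxy (h ▸ rfl))
    · rw [dist_comm, eq_one_or_eq_sqrt_two_iff_sq dist_nonneg, dist_signVec_single_sq]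
      split_ifs <;> simp
    · rw [eq_one_or_eq_sqrt_two_iff_sq dist_nonneg, dist_signVec_single_sq]
      split_ifs <;> simp
    · exact Or.inl (dist_signVec_of_disjoint (card_of_mem_disjointPairs hA)
        (card_of_mem_disjointPairs hB)
        (disjoint_of_mem_disjointPairs hA hB fun h => hxy (h ▸ rfl)))
  · have h01 : ({0, 1} : Finset (Fin 8)) ∈ disjointPairs := by simp [disjointPairs]
    have h23 : ({2, 3} : Finset (Fin 8)) ∈ disjointPairs := by simp [disjointPairs]
    rintro _ (rfl | rfl)
    · exact ⟨_, Or.inr ⟨_, h01, rfl⟩, _, Or.inr ⟨_, h23, rfl⟩,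
        signVec_injective.ne (by decide), dist_signVec_of_disjoint rfl rfl (by decide)⟩
    · exact ⟨_, Or.inl ⟨0, rfl⟩, _, Or.inl ⟨1, rfl⟩, single_one_injective.ne (by decide),
        dist_single_one_single_one (by decide)⟩

/-- The largest 2-distance set in `H_7` containing `R_7` with distances `1` and `√2`
has exactly 12 points. -/
theorem stmt14 :
    IsGreatest {n : ℕ | ∃ X : Set (EuclideanSpace ℝ (Fin (7+1))),
      X.Finite ∧ X ⊆ Hplane 7 ∧ simplex 7 ⊆ X ∧
      distSet X = {1, Real.sqrt 2} ∧ X.ncard = n} 12 := by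
  refine ⟨⟨twelvePointSet, twelvePointSet_finite, twelvePointSet_subset_Hplane,
    Set.subset_union_left, distSet_twelvePointSet, ncard_twelvePointSet⟩, ?_⟩
  rintro n ⟨X, hfin, hH, hS, hD, rfl⟩
  exact ncard_le_twelve hfin hH hS hD.subset
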